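/- arXiv:1205.5773 — 5 statements merged into one kernel-verified Lean document; each statement's English description precedes it below -/
import Mathlib

section
/- Let ψ and u be nonnegative nondecreasing functions on [0,∞), let (a_j)_{j≥0} be a complex sequence converging to L, and let θ ∈ (0,1). Then ψ(|L|)·u(|L|) ≤ ψ(|a₀|/(1−θ))·u(|L|) + sup_{k≥1} ψ(|a_k|/(1−θ))·u(|a_{k−1}−L|/θ). -/
/-!
If `a₀` already lies within `θ‖L‖` of `L`, then `‖L‖ ≤ ‖a₀‖ / (1 - θ)` and the first term
suffices. Otherwise `L ≠ 0`, and since `a → L` there is a first index `k ≥ 1` with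
`‖a_k - L‖ ≤ θ‖L‖`; at that index `‖L‖ ≤ ‖a_k‖ / (1 - θ)` while `‖L‖ < ‖a_{k-1} - L‖ / θ`,
so the `k`-th term of the supremum dominates `ψ(‖L‖) u(‖L‖)`.
-/

open Filter

section Threshold

variable {E : Type*} [SeminormedAddCommGroup E]

lemma norm_le_norm_div_one_sub_of_norm_sub_le {x L : E} {θ : ℝ} (hθ : θ < 1)
    (h : ‖x - L‖ ≤ θ * ‖L‖) : ‖L‖ ≤ ‖x‖ / (1 - θ) := by
  rw [le_div_iff₀ (sub_pos.mpr hθ)]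
  linarith [norm_sub_norm_le L x, norm_sub_rev x L]

lemma exists_norm_le_of_tendsto {a : ℕ → E} {L : E} (ha : Tendsto a atTop (nhds L))
    {θ : ℝ} (hθ : θ ∈ Set.Ioo (0 : ℝ) 1) :
    ‖L‖ ≤ ‖a 0‖ / (1 - θ) ∨
      ∃ k, ‖L‖ ≤ ‖a (k + 1)‖ / (1 - θ) ∧ ‖L‖ ≤ ‖a k - L‖ / θ := by
  obtain ⟨hθ0, hθ1⟩ := hθ
  by_cases h0 : ‖L‖ ≤ ‖a 0‖ / (1 - θ)
  · exact Or.inl h0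
  right
  have hL : 0 < ‖L‖ :=
    (div_nonneg (norm_nonneg _) (sub_pos.mpr hθ1).le).trans_lt (not_le.mp h0)
  let IsNear : ℕ → Prop := fun n ↦ ‖a n - L‖ ≤ θ * ‖L‖
  have h_near_exists : ∃ n, IsNear n := by
    have h_ball : Metric.closedBall L (θ * ‖L‖) ∈ nhds L :=
      Metric.closedBall_mem_nhds L (by positivity)
    obtain ⟨n, hn⟩ := (ha.eventually h_ball).exists
    exact ⟨n, by simpa [IsNear, dist_eq_norm] using hn⟩
  have h_far_zero : ¬ IsNear 0 := fun h ↦ h0 (norm_le_norm_div_one_sub_of_norm_sub_le hθ1 h)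
  obtain ⟨k, hk_far, hk_near⟩ :=
    Nat.exists_not_and_succ_of_not_zero_of_exists h_far_zero h_near_exists
  refine ⟨k, norm_le_norm_div_one_sub_of_norm_sub_le hθ1 hk_near, ?_⟩
  rw [le_div_iff₀ hθ0]
  linarith [not_le.mp hk_far]

end Threshold

theorem stmt3 (ψ u : ℝ → ENNReal) (hψ : Monotone ψ) (hu : Monotone u)
    (a : ℕ → ℂ) (L : ℂ) (ha : Tendsto a atTop (nhds L))
    (θ : ℝ) (hθ : θ ∈ Set.Ioo (0 : ℝ) 1) :
    ψ ‖L‖ * u ‖L‖ ≤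
      ψ (‖a 0‖ / (1 - θ)) * u ‖L‖ +
        ⨆ k : ℕ, ψ (‖a (k + 1)‖ / (1 - θ)) *
          u (‖a k - L‖ / θ) := by
  rcases exists_norm_le_of_tendsto ha hθ with h0 | ⟨k, hk, hk'⟩
  · exact le_add_right (mul_le_mul_left (hψ h0) _)
  · exact le_add_left (le_iSup_of_le k (mul_le_mul' (hψ hk) (hu hk')))
end

section
/- Let ψ, u be nonnegative nondecreasing functions on [0,∞), (a_j) a complex sequence converging to L, θ ∈ (0,1), and let G ⊂ {(k,j) ∈ ℤ² : k > j ≥ 0} contain every pair (k, k−1) with k ≥ 1. Writing G_k = {j : (k,j) ∈ G}, one has ψ(|L|)u(|L|) ≤ ψ(|a₀|/(1−θ))u(|L|) + sup_{k≥1} (1/#G_k) Σ_{j ∈ G_k} ψ(|a_k|/(1−θ)) u(|a_j − L|/θ). -/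
open Filter Finset

/-! Let `k` be the first index with `‖a k - L‖ ≤ θ‖L‖` (it exists when `L ≠ 0`). Then
`‖L‖ ≤ ‖a k‖ / (1 - θ)`, and every `j < k` has `‖L‖ < ‖a j - L‖ / θ`. If `k = 0` (or `L = 0`) the first
term already dominates; otherwise every summand of the `k`-th average dominates `ψ ‖L‖ * u ‖L‖`, since
`G k ⊆ [0, k)` is nonempty. -/

theorem ENNReal.le_inv_card_mul_sum {ι : Type*} {s : Finset ι} (hs : s.Nonempty)
    {f : ι → ENNReal} {c : ENNReal} (h : ∀ i ∈ s, c ≤ f i) :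
    c ≤ (#s : ENNReal)⁻¹ * ∑ i ∈ s, f i := by
  rw [← ENNReal.div_eq_inv_mul,
    ENNReal.le_div_iff_mul_le (Or.inl (by simp [hs.ne_empty])) (Or.inl (ENNReal.natCast_ne_top _)),
    mul_comm, ← nsmul_eq_mul]
  exact card_nsmul_le_sum s f c h

section Normed

variable {E : Type*} [SeminormedAddCommGroup E]

theorem norm_le_div_one_sub_of_norm_sub_le {x y : E} {θ : ℝ} (hθ : θ < 1)
    (h : ‖x - y‖ ≤ θ * ‖y‖) : ‖y‖ ≤ ‖x‖ / (1 - θ) := by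
  rw [le_div_iff₀ (by linarith)]
  have := norm_sub_norm_le y x
  rw [norm_sub_rev] at this
  linarith

theorem Filter.Tendsto.exists_first_norm_sub_le {a : ℕ → E} {L : E}
    (ha : Tendsto a atTop (nhds L)) {ε : ℝ} (hε : 0 < ε) :
    ∃ k, ‖a k - L‖ ≤ ε ∧ ∀ j < k, ε < ‖a j - L‖ := by
  classical
  have hex : ∃ k, ‖a k - L‖ ≤ ε :=
    ((tendsto_iff_norm_sub_tendsto_zero.1 ha).eventually (ge_mem_nhds hε)).exists
  exact ⟨Nat.find hex, Nat.find_spec hex, fun j hj => lt_of_not_ge (Nat.find_min hex hj)⟩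

end Normed

theorem stmt4 (ψ u : ℝ → ENNReal) (hψ : Monotone ψ) (hu : Monotone u)
    (a : ℕ → ℂ) (L : ℂ) (ha : Tendsto a atTop (nhds L))
    (θ : ℝ) (hθ : θ ∈ Set.Ioo (0 : ℝ) 1)
    (G : ℕ → Finset ℕ)
    (hGlt : ∀ k, ∀ j ∈ G k, j < k)
    (hGdiag : ∀ k, 1 ≤ k → k - 1 ∈ G k) :
    ψ (‖L‖) * u (‖L‖) ≤
      ψ (‖a 0‖ / (1 - θ)) * u (‖L‖) +
        ⨆ k : ℕ, ((G (k + 1)).card : ENNReal)⁻¹ *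
          ∑ j ∈ G (k + 1), ψ (‖a (k + 1)‖ / (1 - θ)) *
            u (‖a j - L‖ / θ) := by
  obtain ⟨hθ0, hθ1⟩ := hθ
  rcases eq_or_ne L 0 with rfl | hL
  · have h0 : ‖(0 : ℂ)‖ ≤ ‖a 0‖ / (1 - θ) := by
      rw [norm_zero]
      exact div_nonneg (norm_nonneg _) (sub_pos.2 hθ1).le
    exact le_add_right (mul_le_mul_left (hψ h0) _)
  obtain ⟨k, hk, hmin⟩ := ha.exists_first_norm_sub_le (by positivity : 0 < θ * ‖L‖)
  have hak := norm_le_div_one_sub_of_norm_sub_le hθ1 hk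
  cases k with
  | zero => exact le_add_right (mul_le_mul_left (hψ hak) _)
  | succ m =>
    refine le_add_left (le_iSup_of_le m (ENNReal.le_inv_card_mul_sum
      ⟨m, by simpa using hGdiag (m + 1) (by omega)⟩ fun j hj => ?_))
    have hj : ‖L‖ ≤ ‖a j - L‖ / θ := by
      rw [le_div_iff₀ hθ0]
      linarith [hmin j (hGlt _ j hj)]
    exact mul_le_mul' (hψ hak) (hu hj)
end

section
/- Let W be a probability density on ℝᵈ with W(x) ≤ C e^{−2δ|x|} for all x. Then for every p ∈ [1,∞) and every f with ∫ f W = 0, ∫ |f(x)|ᵖ W(x) dx ≤ 2C ∫∫ |f(x) − f(y)|ᵖ W(x) e^{−δ|x−y|} dx dy. -/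
open MeasureTheory Function
open scoped ENNReal

/-! With `ν = W(y) dy`, a probability measure, the mean-zero condition gives
`f x = ∫ (f x - f y) dν(y)`, so Jensen yields `|f x|ᵖ ≤ ∫ |f x - f y|ᵖ dν(y)`. Integrate this
against `W(x) dx` and bound `W(x) W(y) ≤ C e^{-δ|x-y|} (W(x) + W(y))`, which holds because
`|x - y| ≤ 2 max(|x|, |y|)`; the two resulting double integrals coincide, since the integrand is
symmetric in `(x, y)`. -/

theorem ENNReal.rpow_lintegral_le_lintegral_rpow {α : Type*} [MeasurableSpace α]
    (ν : Measure α) [IsProbabilityMeasure ν] {g : α → ℝ≥0∞} (hg : AEMeasurable g ν)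
    {p : ℝ} (hp : 1 ≤ p) :
    (∫⁻ a, g a ∂ν) ^ p ≤ ∫⁻ a, g a ^ p ∂ν := by
  have h := eLpNorm'_le_eLpNorm'_of_exponent_le one_pos hp ν hg.aestronglyMeasurable
  simp only [eLpNorm'_eq_lintegral_enorm, enorm_eq_self, ENNReal.rpow_one, div_one] at h
  have hp0 : 0 < p := one_pos.trans_le hp
  simpa [← ENNReal.rpow_mul, hp0.ne'] using ENNReal.rpow_le_rpow h hp0.le

theorem ofReal_abs_rpow_le_lintegral_of_integral_mul_eq_zero {α : Type*} [MeasurableSpace α]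
    {μ : Measure α} {W f : α → ℝ} (hW0 : ∀ x, 0 ≤ W x) (hW1 : ∫ x, W x ∂μ = 1)
    (hf : Measurable f) (hfW : Integrable (fun x => f x * W x) μ)
    (hmean : ∫ x, f x * W x ∂μ = 0) {p : ℝ} (hp : 1 ≤ p) (c : ℝ) :
    ENNReal.ofReal (|c| ^ p) ≤ ∫⁻ y, ENNReal.ofReal (|c - f y| ^ p) * ENNReal.ofReal (W y) ∂μ := by
  have hW : Integrable W μ := integrable_of_integral_eq_one hW1
  set ν := μ.withDensity fun y => ENNReal.ofReal (W y)
  have hν : ∀ g : α → ℝ≥0∞, ∫⁻ y, g y ∂ν = ∫⁻ y, g y * ENNReal.ofReal (W y) ∂μ := fun g => by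
    rw [lintegral_withDensity_eq_lintegral_mul_non_measurable₀ _ hW.1.aemeasurable.ennreal_ofReal
      (.of_forall fun _ => ENNReal.ofReal_lt_top)]
    simp only [Pi.mul_apply, mul_comm]
  have : IsProbabilityMeasure ν := ⟨by
    rw [withDensity_apply _ .univ, setLIntegral_univ,
      ← ofReal_integral_eq_lintegral_ofReal hW (.of_forall hW0), hW1, ENNReal.ofReal_one]⟩
  have hc : ∫ y, (c - f y) * W y ∂μ = c := by
    simp only [sub_mul]
    rw [integral_sub (hW.const_mul c) hfW, integral_const_mul, hW1, hmean, mul_one, sub_zero]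
  have hp0 : 0 < p := one_pos.trans_le hp
  calc ENNReal.ofReal (|c| ^ p) = ‖∫ y, (c - f y) * W y ∂μ‖ₑ ^ p := by
        rw [hc, ← ofReal_norm, Real.norm_eq_abs,
          ENNReal.ofReal_rpow_of_nonneg (abs_nonneg c) hp0.le]
    _ ≤ (∫⁻ y, ENNReal.ofReal |c - f y| ∂ν) ^ p := by
        gcongr
        refine (enorm_integral_le_lintegral_enorm _).trans_eq ?_
        rw [hν]
        refine lintegral_congr fun y => ?_
        rw [← ofReal_norm, norm_mul, Real.norm_eq_abs, Real.norm_of_nonneg (hW0 y),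
          ENNReal.ofReal_mul (abs_nonneg _)]
    _ ≤ ∫⁻ y, ENNReal.ofReal |c - f y| ^ p ∂ν :=
        ENNReal.rpow_lintegral_le_lintegral_rpow ν (by fun_prop) hp
    _ = _ := by
        rw [hν]
        simp only [ENNReal.ofReal_rpow_of_nonneg (abs_nonneg _) hp0.le]

theorem lintegral_lintegral_mul_le_two_mul {α : Type*} [MeasurableSpace α] {μ : Measure α}
    [SFinite μ] {F K : α → α → ℝ≥0∞} {w : α → ℝ≥0∞} (hF : Measurable (uncurry F))
    (hK : Measurable (uncurry K)) (hw : AEMeasurable w μ) (hF_symm : ∀ x y, F x y = F y x)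
    (hK_symm : ∀ x y, K x y = K y x) (hwK : ∀ x y, w x * w y ≤ K x y * (w x + w y)) :
    ∫⁻ x, ∫⁻ y, F x y * (w x * w y) ∂μ ∂μ ≤ 2 * ∫⁻ x, ∫⁻ y, F x y * (w x * K x y) ∂μ ∂μ := by
  have hFwK : AEMeasurable (uncurry fun x y => F x y * (w x * K x y)) (μ.prod μ) :=
    hF.aemeasurable.mul ((hw.comp_quasiMeasurePreserving
      Measure.quasiMeasurePreserving_fst).mul hK.aemeasurable)
  have hswap : ∫⁻ x, ∫⁻ y, F x y * (w y * K x y) ∂μ ∂μ =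
      ∫⁻ x, ∫⁻ y, F x y * (w x * K x y) ∂μ ∂μ := by
    rw [lintegral_lintegral_swap (hF.aemeasurable.mul ((hw.comp_quasiMeasurePreserving
      Measure.quasiMeasurePreserving_snd).mul hK.aemeasurable))]
    simp only [hF_symm _ _, hK_symm _ _]
  calc ∫⁻ x, ∫⁻ y, F x y * (w x * w y) ∂μ ∂μ
      ≤ ∫⁻ x, ∫⁻ y, (F x y * (w x * K x y) + F x y * (w y * K x y)) ∂μ ∂μ := by
        gcongr with x y
        calc F x y * (w x * w y) ≤ F x y * (K x y * (w x + w y)) :=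
              mul_le_mul_of_nonneg_left (hwK x y) zero_le
          _ = _ := by ring
    _ = ∫⁻ x, ∫⁻ y, F x y * (w x * K x y) ∂μ ∂μ +
          ∫⁻ x, ∫⁻ y, F x y * (w y * K x y) ∂μ ∂μ := by
        rw [lintegral_congr fun x =>
          lintegral_add_left (μ := μ) (f := fun y => F x y * (w x * K x y))
            (hF.of_uncurry_left.mul (measurable_const.mul hK.of_uncurry_left)) _]
        exact lintegral_add_left' hFwK.lintegral_prod_right' _
    _ = _ := by rw [hswap, two_mul]

theorem mul_le_exp_neg_norm_sub_mul_add {E : Type*} [SeminormedAddCommGroup E] {W : E → ℝ}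
    {C δ : ℝ} (hW0 : ∀ x, 0 ≤ W x) (hC : 0 ≤ C) (hδ : 0 ≤ δ)
    (hbound : ∀ x, W x ≤ C * Real.exp (-2 * δ * ‖x‖)) (x y : E) :
    W x * W y ≤ C * Real.exp (-δ * ‖x - y‖) * (W x + W y) := by
  wlog hxy : ‖x‖ ≤ ‖y‖ generalizing x y
  · simpa only [mul_comm (W x), add_comm (W x), norm_sub_rev] using this y x (le_of_not_ge hxy)
  have hy : W y ≤ C * Real.exp (-δ * ‖x - y‖) := by
    refine (hbound y).trans (mul_le_mul_of_nonneg_left (Real.exp_le_exp.2 ?_) hC)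
    nlinarith [norm_sub_le x y]
  calc W x * W y ≤ W x * (C * Real.exp (-δ * ‖x - y‖)) := mul_le_mul_of_nonneg_left hy (hW0 x)
    _ ≤ C * Real.exp (-δ * ‖x - y‖) * (W x + W y) := by
        rw [mul_add, mul_comm]
        exact le_add_of_nonneg_right (mul_nonneg (mul_nonneg hC (Real.exp_pos _).le) (hW0 y))

theorem lintegral_rpow_mul_le_of_integral_mul_eq_zero {E : Type*} [NormedAddCommGroup E]
    [MeasurableSpace E] [OpensMeasurableSpace E] [MeasurableSub₂ E] (μ : Measure E) [SFinite μ]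
    {W f : E → ℝ} {C δ p : ℝ} (hW0 : ∀ x, 0 ≤ W x) (hW1 : ∫ x, W x ∂μ = 1) (hC : 0 ≤ C)
    (hδ : 0 ≤ δ) (hbound : ∀ x, W x ≤ C * Real.exp (-2 * δ * ‖x‖)) (hp : 1 ≤ p)
    (hf : Measurable f) (hfW : Integrable (fun x => f x * W x) μ)
    (hmean : ∫ x, f x * W x ∂μ = 0) :
    ∫⁻ x, ENNReal.ofReal (|f x| ^ p) * ENNReal.ofReal (W x) ∂μ ≤
      ENNReal.ofReal (2 * C) *
        ∫⁻ x, ∫⁻ y, ENNReal.ofReal (|f x - f y| ^ p) *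
          (ENNReal.ofReal (W x) * ENNReal.ofReal (Real.exp (-δ * ‖x - y‖))) ∂μ ∂μ := by
  have hW : AEMeasurable W μ := (integrable_of_integral_eq_one hW1).aemeasurable
  set F : E → E → ℝ≥0∞ := fun x y => ENNReal.ofReal (|f x - f y| ^ p)
  set w : E → ℝ≥0∞ := fun x => ENNReal.ofReal (W x)
  set K : E → E → ℝ≥0∞ := fun x y => ENNReal.ofReal (C * Real.exp (-δ * ‖x - y‖))
  have hwK : ∀ x y, w x * w y ≤ K x y * (w x + w y) := fun x y => by
    simp only [w, K, ← ENNReal.ofReal_add (hW0 x) (hW0 y), ← ENNReal.ofReal_mul (hW0 x),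
      ← ENNReal.ofReal_mul (mul_nonneg hC (Real.exp_pos _).le)]
    exact ENNReal.ofReal_le_ofReal (mul_le_exp_neg_norm_sub_mul_add hW0 hC hδ hbound x y)
  calc ∫⁻ x, ENNReal.ofReal (|f x| ^ p) * w x ∂μ
      ≤ ∫⁻ x, (∫⁻ y, F x y * w y ∂μ) * w x ∂μ := by
        gcongr with x
        exact ofReal_abs_rpow_le_lintegral_of_integral_mul_eq_zero hW0 hW1 hf hfW hmean hp (f x)
    _ = ∫⁻ x, ∫⁻ y, F x y * (w x * w y) ∂μ ∂μ := by
        refine lintegral_congr fun x => ?_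
        rw [← lintegral_mul_const' _ _ ENNReal.ofReal_ne_top]
        exact lintegral_congr fun y => by ring
    _ ≤ 2 * ∫⁻ x, ∫⁻ y, F x y * (w x * K x y) ∂μ ∂μ :=
        lintegral_lintegral_mul_le_two_mul (by fun_prop) (by fun_prop) hW.ennreal_ofReal
          (fun x y => by simp only [F, abs_sub_comm]) (fun x y => by simp only [K, norm_sub_rev])
          hwK
    _ = _ := by
        simp only [K, ENNReal.ofReal_mul hC, ENNReal.ofReal_mul zero_le_two, ENNReal.ofReal_ofNat,
          mul_left_comm _ (ENNReal.ofReal C)]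
        rw [lintegral_congr fun x => lintegral_const_mul' _ _ ENNReal.ofReal_ne_top,
          lintegral_const_mul' _ _ ENNReal.ofReal_ne_top, mul_assoc]

theorem stmt7 {d : ℕ} (W : EuclideanSpace ℝ (Fin d) → ℝ)
    (hW0 : ∀ x, 0 ≤ W x) (hW1 : ∫ x, W x = 1)
    (C δ : ℝ) (hC : 0 < C) (hδ : 0 < δ)
    (hbound : ∀ x, W x ≤ C * Real.exp (-2 * δ * ‖x‖))
    (p : ℝ) (hp : 1 ≤ p)
    (f : EuclideanSpace ℝ (Fin d) → ℝ) (hf : Measurable f)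
    (hfW : Integrable (fun x => f x * W x)) (hmean : ∫ x, f x * W x = 0) :
    ∫⁻ x, ENNReal.ofReal (|f x| ^ p) * ENNReal.ofReal (W x) ≤
      ENNReal.ofReal (2 * C) *
        ∫⁻ x, ∫⁻ y, ENNReal.ofReal (|f x - f y| ^ p) *
          (ENNReal.ofReal (W x) * ENNReal.ofReal (Real.exp (-δ * ‖x - y‖))) :=
  lintegral_rpow_mul_le_of_integral_mul_eq_zero volume hW0 hW1 hC.le hδ.le hbound hp hf hfW
    hmean
end

section
/- Let Ω ⊂ ℝᵈ be open and bounded such that the open 1/2-neighborhood of Ω is connected. Then there exists a constant C such that for every p ∈ [1,∞) fixed and every f ∈ Lᵖ(Ω) with ∫_Ω f dx = 0, ∫_Ω |f(x)|ᵖ dx ≤ C ∫∫_{Ω×Ω, |x−y|<1} |f(x) − f(y)|ᵖ dx dy. -/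
/-!
Since `f` has mean zero, Jensen's inequality bounds `∫ |f|ᵖ` by `|Ω|⁻¹ ∫∫_{Ω×Ω} |f x - f y|ᵖ`,
so it suffices to control the interaction `∫_A ∫_B |f x - f y|ᵖ` of any two balls of radius `1/2`
centred in `Ω` by the unit-scale energy. This holds trivially for sets at mutual distance `< 1`,
and averaging the triangle inequality over an intermediate set `W` of positive measure shows that
control of `(A, W)` and `(B, W)` gives control of `(A, B)`. Connectedness of the
`1/2`-neighbourhood links any two points of `Ω` by a chain of points of `Ω` with consecutive
distances `< 1`, along which control propagates; finitely many balls cover the bounded set `Ω`.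
-/

open MeasureTheory Metric ENNReal

lemma ofReal_abs_rpow {p : ℝ} (hp : 0 ≤ p) (r : ℝ) : ENNReal.ofReal (|r| ^ p) = ‖r‖ₑ ^ p := by
  rw [← ENNReal.ofReal_rpow_of_nonneg (abs_nonneg _) hp, Real.enorm_eq_ofReal_abs]

lemma ofReal_abs_sub_rpow {p : ℝ} (hp : 0 ≤ p) (a b : ℝ) :
    ENNReal.ofReal (|a - b| ^ p) = edist a b ^ p := by
  rw [ofReal_abs_rpow hp, edist_eq_enorm_sub]

lemma edist_rpow_le_two_rpow_mul {p : ℝ} (hp : 1 ≤ p) (a b c : ℝ) :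
    edist a c ^ p ≤ 2 ^ (p - 1) * (edist a b ^ p + edist b c ^ p) :=
  (ENNReal.rpow_le_rpow (edist_triangle a b c) (by linarith)).trans
    (ENNReal.rpow_add_le_mul_rpow_add_rpow _ _ hp)

theorem rpow_lintegral_le_lintegral_rpow_mul {α : Type*} [MeasurableSpace α] {μ : Measure α}
    {φ : α → ℝ≥0∞} (hφ : AEMeasurable φ μ) {p : ℝ} (hp : 1 ≤ p) :
    (∫⁻ a, φ a ∂μ) ^ p ≤ (∫⁻ a, φ a ^ p ∂μ) * μ Set.univ ^ (p - 1) := by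
  have hp₀ : 0 < p := by linarith
  have h := eLpNorm'_le_eLpNorm'_mul_rpow_measure_univ one_pos hp hφ.aestronglyMeasurable
  simp only [eLpNorm'_eq_lintegral_enorm, enorm_eq_self, rpow_one, div_one] at h
  calc (∫⁻ a, φ a ∂μ) ^ p ≤ ((∫⁻ a, φ a ^ p ∂μ) ^ (1 / p) * μ Set.univ ^ (1 - 1 / p)) ^ p :=
        ENNReal.rpow_le_rpow h hp₀.le
    _ = (∫⁻ a, φ a ^ p ∂μ) * μ Set.univ ^ (p - 1) := by
        rw [ENNReal.mul_rpow_of_nonneg _ _ hp₀.le, ← ENNReal.rpow_mul, ← ENNReal.rpow_mul,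
          one_div_mul_cancel hp₀.ne', ENNReal.rpow_one, sub_mul, one_div_mul_cancel hp₀.ne',
          one_mul]

theorem lintegral_enorm_rpow_le_of_integral_eq_zero {α : Type*} [MeasurableSpace α]
    {ν : Measure α} [IsFiniteMeasure ν] {p : ℝ} (hp : 1 ≤ p) {f : α → ℝ} (hf : Integrable f ν)
    (hmean : ∫ x, f x ∂ν = 0) :
    ∫⁻ x, ‖f x‖ₑ ^ p ∂ν ≤ (ν Set.univ)⁻¹ * ∫⁻ x, ∫⁻ y, edist (f x) (f y) ^ p ∂ν ∂ν := by
  rcases eq_zero_or_neZero ν with rfl | hν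
  · simp
  have hp₀ : 0 ≤ p := by linarith
  set U := ν Set.univ
  have hU₀ : U ≠ 0 := Measure.measure_univ_ne_zero.2 hν.out
  have hU : U ≠ ∞ := measure_ne_top ν _
  rw [← lintegral_const_mul' _ _ (ENNReal.inv_ne_top.2 hU₀)]
  refine lintegral_mono fun x ↦ ?_
  have hmass : U * ‖f x‖ₑ ≤ ∫⁻ y, edist (f x) (f y) ∂ν :=
    calc U * ‖f x‖ₑ = ‖∫ y, (f x - f y) ∂ν‖ₑ := by
          rw [integral_sub (integrable_const _) hf, hmean, sub_zero, integral_const, enorm_smul,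
            Real.enorm_of_nonneg measureReal_nonneg, measureReal_def, ENNReal.ofReal_toReal hU]
      _ ≤ ∫⁻ y, ‖f x - f y‖ₑ ∂ν := enorm_integral_le_lintegral_enorm _
      _ = ∫⁻ y, edist (f x) (f y) ∂ν := by simp_rw [edist_eq_enorm_sub]
  have hholder := rpow_lintegral_le_lintegral_rpow_mul (μ := ν)
    ((aemeasurable_const (b := f x)).edist hf.aemeasurable) hp
  rw [← ENNReal.mul_le_mul_iff_right (ENNReal.rpow_pos (pos_iff_ne_zero.2 hU₀) hU).ne'
    (ENNReal.rpow_ne_top_of_nonneg hp₀ hU)]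
  calc U ^ p * ‖f x‖ₑ ^ p = (U * ‖f x‖ₑ) ^ p := (ENNReal.mul_rpow_of_nonneg _ _ hp₀).symm
    _ ≤ (∫⁻ y, edist (f x) (f y) ∂ν) ^ p := ENNReal.rpow_le_rpow hmass hp₀
    _ ≤ (∫⁻ y, edist (f x) (f y) ^ p ∂ν) * U ^ (p - 1) := hholder
    _ = U ^ p * (U⁻¹ * ∫⁻ y, edist (f x) (f y) ^ p ∂ν) := by
        rw [ENNReal.rpow_sub _ _ hU₀ hU, ENNReal.rpow_one, div_eq_mul_inv]; ring

theorem lintegral_le_sum_setLIntegral_of_ae_mem_biUnion {α ι : Type*} [MeasurableSpace α]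
    {ν : Measure α} {T : Finset ι} {U : ι → Set α} (hcover : ∀ᵐ x ∂ν, x ∈ ⋃ i ∈ T, U i)
    (g : α → ℝ≥0∞) : ∫⁻ x, g x ∂ν ≤ ∑ i ∈ T, ∫⁻ x in U i, g x ∂ν :=
  calc ∫⁻ x, g x ∂ν = ∫⁻ x in ⋃ i : T, U i, g x ∂ν := by
        rw [Measure.restrict_eq_self_of_ae_mem (by simpa using hcover)]
    _ ≤ ∑' i : T, ∫⁻ x in U i, g x ∂ν := lintegral_iUnion_le _ _
    _ = ∑ i ∈ T, ∫⁻ x in U i, g x ∂ν := Finset.tsum_subtype T (fun i ↦ ∫⁻ x in U i, g x ∂ν)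

theorem Metric.subset_of_isPreconnected_thickening {α : Type*} [PseudoMetricSpace α] {δ : ℝ}
    (hδ : 0 < δ) {Ω S : Set α} (hconn : IsPreconnected (thickening δ Ω)) {a : α} (ha : a ∈ Ω)
    (haS : a ∈ S) (hS : ∀ x ∈ Ω ∩ S, ∀ y ∈ Ω, dist x y < 2 * δ → y ∈ S) : Ω ⊆ S := by
  intro b hb
  by_contra hbS
  have hcover : thickening δ Ω ⊆ thickening δ (Ω ∩ S) ∪ thickening δ (Ω \ S) := by
    rw [← thickening_union, Set.inter_union_sdiff]
  obtain ⟨z, -, hzS, hzS'⟩ := hconn _ _ isOpen_thickening isOpen_thickening hcover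
    ⟨a, self_subset_thickening hδ _ ha, self_subset_thickening hδ _ ⟨ha, haS⟩⟩
    ⟨b, self_subset_thickening hδ _ hb, self_subset_thickening hδ _ ⟨hb, hbS⟩⟩
  obtain ⟨x, hx, hzx⟩ := mem_thickening_iff.1 hzS
  obtain ⟨y, hy, hzy⟩ := mem_thickening_iff.1 hzS'
  exact hy.2 (hS x hx y hy.1 (by linarith [dist_triangle_left x y z]))

namespace UnitScalePoincare

section Measurable

variable {α : Type*} [MeasurableSpace α] (ν : Measure α) (p : ℝ)

noncomputable def crossEnergy (f : α → ℝ) (A B : Set α) : ℝ≥0∞ :=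
  ∫⁻ x in A, ∫⁻ y in B, edist (f x) (f y) ^ p ∂ν ∂ν

variable {ν p}

lemma edist_rpow_le_setLIntegral (hp : 1 ≤ p) {f : α → ℝ} (hf : Measurable f) {W : Set α}
    (hW₀ : ν W ≠ 0) (hW : ν W ≠ ∞) (x y : α) :
    edist (f x) (f y) ^ p ≤ 2 ^ (p - 1) * (ν W)⁻¹ *
      (∫⁻ w in W, edist (f x) (f w) ^ p ∂ν + ∫⁻ w in W, edist (f y) (f w) ^ p ∂ν) := by
  have hint : edist (f x) (f y) ^ p * ν W ≤ 2 ^ (p - 1) *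
      (∫⁻ w in W, edist (f x) (f w) ^ p ∂ν + ∫⁻ w in W, edist (f y) (f w) ^ p ∂ν) :=
    calc edist (f x) (f y) ^ p * ν W = ∫⁻ _ in W, edist (f x) (f y) ^ p ∂ν :=
          (setLIntegral_const _ _).symm
      _ ≤ ∫⁻ w in W, 2 ^ (p - 1) * (edist (f x) (f w) ^ p + edist (f y) (f w) ^ p) ∂ν :=
          lintegral_mono fun w ↦ by
            rw [edist_comm (f y)]; exact edist_rpow_le_two_rpow_mul hp _ _ _
      _ = _ := by
          rw [lintegral_const_mul' _ _ (by finiteness),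
            lintegral_add_left ((measurable_const.edist hf).pow_const p)]
  rwa [mul_right_comm, ← div_eq_mul_inv, ENNReal.le_div_iff_mul_le (.inl hW₀) (.inl hW)]

lemma crossEnergy_le_of_measure_ne_zero [IsFiniteMeasure ν] (hp : 1 ≤ p) {f : α → ℝ}
    (hf : Measurable f) (A B : Set α) {W : Set α} (hW₀ : ν W ≠ 0) :
    crossEnergy ν p f A B ≤ 2 ^ (p - 1) * (ν W)⁻¹ *
      (ν B * crossEnergy ν p f A W + ν A * crossEnergy ν p f B W) := by
  set c : ℝ≥0∞ := 2 ^ (p - 1) * (ν W)⁻¹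
  have hc : c ≠ ∞ := by finiteness
  set F : α → ℝ≥0∞ := fun x ↦ ∫⁻ w in W, edist (f x) (f w) ^ p ∂ν
  calc crossEnergy ν p f A B ≤ ∫⁻ x in A, ∫⁻ y in B, c * (F x + F y) ∂ν ∂ν :=
        lintegral_mono fun x ↦ lintegral_mono fun y ↦
          edist_rpow_le_setLIntegral hp hf hW₀ (measure_ne_top ν W) x y
    _ = ∫⁻ x in A, c * (F x * ν B + ∫⁻ y in B, F y ∂ν) ∂ν := by
        congr! 2 with x
        rw [lintegral_const_mul' _ _ hc, lintegral_add_left measurable_const, setLIntegral_const]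
    _ = c * ((∫⁻ x in A, F x ∂ν) * ν B + (∫⁻ y in B, F y ∂ν) * ν A) := by
        rw [lintegral_const_mul' _ _ hc, lintegral_add_right _ measurable_const,
          lintegral_mul_const' _ _ (measure_ne_top ν B), setLIntegral_const]
    _ = _ := by simp only [crossEnergy, c, F]; ring

lemma lintegral_lintegral_le_sum_crossEnergy [SFinite ν] {f : α → ℝ} (hf : Measurable f)
    {ι : Type*} {T : Finset ι} {U : ι → Set α} (hcover : ∀ᵐ x ∂ν, x ∈ ⋃ i ∈ T, U i) :
    ∫⁻ x, ∫⁻ y, edist (f x) (f y) ^ p ∂ν ∂ν ≤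
      ∑ i ∈ T, ∑ j ∈ T, crossEnergy ν p f (U i) (U j) :=
  calc ∫⁻ x, ∫⁻ y, edist (f x) (f y) ^ p ∂ν ∂ν
      ≤ ∑ i ∈ T, ∫⁻ x in U i, ∫⁻ y, edist (f x) (f y) ^ p ∂ν ∂ν :=
        lintegral_le_sum_setLIntegral_of_ae_mem_biUnion hcover _
    _ ≤ ∑ i ∈ T, ∫⁻ x in U i, ∑ j ∈ T, ∫⁻ y in U j, edist (f x) (f y) ^ p ∂ν ∂ν := by
        gcongr with i hi x
        exact lintegral_le_sum_setLIntegral_of_ae_mem_biUnion hcover _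
    _ = ∑ i ∈ T, ∑ j ∈ T, crossEnergy ν p f (U i) (U j) := by
        refine Finset.sum_congr rfl fun i _ ↦ lintegral_finsetSum T fun j _ ↦ ?_
        exact (((hf.comp measurable_fst).edist (hf.comp measurable_snd)).pow_const p
          ).lintegral_prod_right'

end Measurable

section Metric

variable {α : Type*} [PseudoMetricSpace α] [MeasurableSpace α] (ν : Measure α) (p : ℝ)

noncomputable def localEnergy (f : α → ℝ) : ℝ≥0∞ :=
  ∫⁻ x, ∫⁻ y, ENNReal.ofReal (if dist x y < 1 then |f x - f y| ^ p else 0) ∂ν ∂ν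

def CrossEnergyBounded (A B : Set α) : Prop :=
  ∃ C : ℝ≥0∞, C ≠ ∞ ∧ ∀ f : α → ℝ, Measurable f → crossEnergy ν p f A B ≤ C * localEnergy ν p f

variable {ν p}

lemma localEnergy_congr_ae {f g : α → ℝ} (hfg : f =ᵐ[ν] g) :
    localEnergy ν p f = localEnergy ν p g :=
  lintegral_congr_ae <| hfg.mono fun x hx ↦
    lintegral_congr_ae <| hfg.mono fun y hy ↦ by simp only [hx, hy]

lemma crossEnergyBounded_of_dist_lt (hp : 0 ≤ p) {A B : Set α}
    (hA : MeasurableSet A) (hB : MeasurableSet B) (hAB : ∀ x ∈ A, ∀ y ∈ B, dist x y < 1) :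
    CrossEnergyBounded ν p A B := by
  refine ⟨1, one_ne_top, fun f _ ↦ ?_⟩
  calc crossEnergy ν p f A B
      = ∫⁻ x in A, ∫⁻ y in B,
          ENNReal.ofReal (if dist x y < 1 then |f x - f y| ^ p else 0) ∂ν ∂ν :=
        setLIntegral_congr_fun hA fun x hx ↦ setLIntegral_congr_fun hB fun y hy ↦ by
          rw [if_pos (hAB x hx y hy), ofReal_abs_sub_rpow hp]
    _ ≤ 1 * localEnergy ν p f := by
        rw [one_mul]
        exact lintegral_mono' Measure.restrict_le_self fun x ↦
          lintegral_mono' Measure.restrict_le_self le_rfl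

lemma CrossEnergyBounded.mono_right {A B B' : Set α} (h : CrossEnergyBounded ν p A B)
    (hB' : B' ⊆ B) : CrossEnergyBounded ν p A B' := by
  obtain ⟨C, hC, hbound⟩ := h
  exact ⟨C, hC, fun f hf ↦ (lintegral_mono fun x ↦ lintegral_mono_set hB').trans (hbound f hf)⟩

lemma CrossEnergyBounded.trans [IsFiniteMeasure ν] (hp : 1 ≤ p) {A B W : Set α}
    (hW₀ : ν W ≠ 0) (hAW : CrossEnergyBounded ν p A W) (hBW : CrossEnergyBounded ν p B W) :
    CrossEnergyBounded ν p A B := by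
  obtain ⟨C₁, hC₁, h₁⟩ := hAW
  obtain ⟨C₂, hC₂, h₂⟩ := hBW
  refine ⟨2 ^ (p - 1) * (ν W)⁻¹ * (ν B * C₁ + ν A * C₂), by finiteness, fun f hf ↦ ?_⟩
  calc crossEnergy ν p f A B
      ≤ 2 ^ (p - 1) * (ν W)⁻¹ * (ν B * crossEnergy ν p f A W + ν A * crossEnergy ν p f B W) :=
        crossEnergy_le_of_measure_ne_zero hp hf A B hW₀
    _ ≤ 2 ^ (p - 1) * (ν W)⁻¹ *
          (ν B * (C₁ * localEnergy ν p f) + ν A * (C₂ * localEnergy ν p f)) := by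
        gcongr
        exacts [h₁ f hf, h₂ f hf]
    _ = _ := by ring

lemma CrossEnergyBounded.ball_of_dist_lt [IsFiniteMeasure ν] [OpensMeasurableSpace α]
    (hp : 1 ≤ p) {A : Set α} {b c : α} (hb : ∀ r > 0, ν (ball b r) ≠ 0)
    (hc : ∀ r > 0, ν (ball c r) ≠ 0) (hbc : dist b c < 1)
    (h : CrossEnergyBounded ν p A (ball b (1 / 2))) :
    CrossEnergyBounded ν p A (ball c (1 / 2)) := by
  have hp₀ : 0 ≤ p := by linarith
  -- `s` makes both pairs `(ball c s, ball b s)` and `(ball c (1/2), ball c s)` unit-close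
  set s := (1 - dist b c) / 3 with hs_def
  have hs : 0 < s := by linarith
  have hs' : s ≤ 1 / 3 := by linarith [dist_nonneg (x := b) (y := c)]
  have hcb : CrossEnergyBounded ν p (ball c s) (ball b s) :=
    crossEnergyBounded_of_dist_lt hp₀ measurableSet_ball measurableSet_ball fun x hx y hy ↦ by
      have := dist_triangle4 x c b y
      rw [dist_comm c b] at this
      linarith [mem_ball.1 hx, mem_ball'.1 hy]
  have hcc : CrossEnergyBounded ν p (ball c (1 / 2)) (ball c s) :=
    crossEnergyBounded_of_dist_lt hp₀ measurableSet_ball measurableSet_ball fun x hx y hy ↦ by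
      linarith [dist_triangle x c y, mem_ball.1 hx, mem_ball'.1 hy]
  have hAc : CrossEnergyBounded ν p A (ball c s) :=
    (h.mono_right (ball_subset_ball (by linarith))).trans hp (hb s hs) hcb
  exact hAc.trans hp (hc s hs) hcc

theorem crossEnergyBounded_ball_ball [IsFiniteMeasure ν] [OpensMeasurableSpace α] (hp : 1 ≤ p)
    {Ω : Set α} (hconn : IsPreconnected (thickening (1 / 2) Ω))
    (hpos : ∀ c ∈ Ω, ∀ r > 0, ν (ball c r) ≠ 0) {a b : α} (ha : a ∈ Ω) (hb : b ∈ Ω) :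
    CrossEnergyBounded ν p (ball a (1 / 2)) (ball b (1 / 2)) := by
  refine subset_of_isPreconnected_thickening (by norm_num) hconn ha
    (S := {c | CrossEnergyBounded ν p (ball a (1 / 2)) (ball c (1 / 2))}) ?_ ?_ hb
  · refine crossEnergyBounded_of_dist_lt (by linarith) measurableSet_ball measurableSet_ball
      fun x hx y hy ↦ ?_
    linarith [dist_triangle_right x y a, mem_ball.1 hx, mem_ball.1 hy]
  · exact fun x hx y hy hxy ↦
      hx.2.ball_of_dist_lt hp (hpos x hx.1) (hpos y hy) (by linarith)

theorem exists_lintegral_enorm_rpow_le_mul_localEnergy [IsFiniteMeasure ν] [NeZero ν]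
    [OpensMeasurableSpace α] (hp : 1 ≤ p) {Ω : Set α} (hΩ : TotallyBounded Ω)
    (hνΩ : ∀ᵐ x ∂ν, x ∈ Ω) (hpos : ∀ c ∈ Ω, ∀ r > 0, ν (ball c r) ≠ 0)
    (hconn : IsPreconnected (thickening (1 / 2) Ω)) :
    ∃ C : ℝ≥0∞, C ≠ ∞ ∧ ∀ f : α → ℝ, Measurable f → Integrable f ν → ∫ x, f x ∂ν = 0 →
      ∫⁻ x, ‖f x‖ₑ ^ p ∂ν ≤ C * localEnergy ν p f := by
  obtain ⟨t, htΩ, htfin, hcover⟩ := finite_approx_of_totallyBounded hΩ (1 / 2) (by norm_num)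
  obtain ⟨T, rfl⟩ := htfin.exists_finset_coe
  have hcoverT : ∀ᵐ x ∂ν, x ∈ ⋃ a ∈ T, ball a (1 / 2) :=
    hνΩ.mono fun x hx ↦ by simpa using hcover hx
  choose! C hCfin hC using fun a (ha : a ∈ T) b (hb : b ∈ T) ↦
    crossEnergyBounded_ball_ball hp hconn hpos (htΩ ha) (htΩ hb)
  refine ⟨(ν Set.univ)⁻¹ * ∑ a ∈ T, ∑ b ∈ T, C a b, ?_, fun f hf hfi hmean ↦ ?_⟩
  · exact mul_ne_top (inv_ne_top.2 (Measure.measure_univ_ne_zero.2 (NeZero.ne ν)))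
      (sum_ne_top.2 fun a ha ↦ sum_ne_top.2 fun b hb ↦ hCfin a ha b hb)
  calc ∫⁻ x, ‖f x‖ₑ ^ p ∂ν
      ≤ (ν Set.univ)⁻¹ * ∫⁻ x, ∫⁻ y, edist (f x) (f y) ^ p ∂ν ∂ν :=
        lintegral_enorm_rpow_le_of_integral_eq_zero hp hfi hmean
    _ ≤ (ν Set.univ)⁻¹ * ∑ a ∈ T, ∑ b ∈ T, crossEnergy ν p f (ball a (1 / 2)) (ball b (1 / 2)) := by
        gcongr
        exact lintegral_lintegral_le_sum_crossEnergy hf hcoverT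
    _ ≤ (ν Set.univ)⁻¹ * ∑ a ∈ T, ∑ b ∈ T, C a b * localEnergy ν p f := by
        gcongr with a ha b hb
        exact hC a ha b hb f hf
    _ = _ := by simp only [← Finset.sum_mul, mul_assoc]

end Metric

end UnitScalePoincare

open UnitScalePoincare in
theorem stmt15_general {d : ℕ} (Ω : Set (EuclideanSpace ℝ (Fin d)))
    (hΩopen : IsOpen Ω) (hΩbdd : Bornology.IsBounded Ω)
    (hconn : IsConnected (Metric.thickening (1 / 2) Ω)) :
    ∀ p : ℝ, 1 ≤ p → ∃ C : ℝ, 0 < C ∧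
      ∀ f : EuclideanSpace ℝ (Fin d) → ℝ,
        MemLp f (ENNReal.ofReal p) (volume.restrict Ω) →
        IntegrableOn f Ω volume → (∫ x in Ω, f x = 0) →
        ∫⁻ x in Ω, ENNReal.ofReal (|f x| ^ p) ≤
          ENNReal.ofReal C *
            ∫⁻ x in Ω, ∫⁻ y in Ω,
              ENNReal.ofReal (if ‖x - y‖ < 1 then |f x - f y| ^ p else 0) := by
  intro p hp
  obtain ⟨a, ha, -⟩ := mem_thickening_iff.1 hconn.nonempty.some_mem
  have : IsFiniteMeasure (volume.restrict Ω) :=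
    isFiniteMeasure_restrict.2 hΩbdd.measure_lt_top.ne
  have : NeZero (volume.restrict Ω) :=
    ⟨Measure.restrict_eq_zero.not.2 (hΩopen.measure_pos volume ⟨a, ha⟩).ne'⟩
  obtain ⟨C, hC, hbound⟩ := exists_lintegral_enorm_rpow_le_mul_localEnergy hp
    (hΩbdd.isCompact_closure.totallyBounded.subset subset_closure)
    (ae_restrict_mem hΩopen.measurableSet) (fun c hc r hr ↦ by
      rw [Measure.restrict_apply measurableSet_ball]
      exact ((isOpen_ball.inter hΩopen).measure_pos volume ⟨c, mem_ball_self hr, hc⟩).ne')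
    hconn.isPreconnected
  refine ⟨C.toReal + 1, by positivity, fun f _ hfi hmean ↦ ?_⟩
  have hf : AEMeasurable f (volume.restrict Ω) := hfi.aemeasurable
  have hfg := hf.ae_eq_mk
  calc ∫⁻ x in Ω, ENNReal.ofReal (|f x| ^ p)
      = ∫⁻ x in Ω, ‖hf.mk f x‖ₑ ^ p :=
        lintegral_congr_ae <| hfg.mono fun x hx ↦ by
          simp only [hx, ofReal_abs_rpow (zero_le_one.trans hp)]
    _ ≤ C * localEnergy (volume.restrict Ω) p (hf.mk f) :=
        hbound _ hf.measurable_mk (hfi.congr hfg)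
          (by rwa [← integral_congr_ae hfg])
    _ ≤ ENNReal.ofReal (C.toReal + 1) * localEnergy (volume.restrict Ω) p f := by
        rw [← localEnergy_congr_ae hfg]
        gcongr
        exact (ENNReal.le_ofReal_iff_toReal_le hC (by positivity)).2 (by linarith)
    _ = _ := by simp only [localEnergy, dist_eq_norm]

theorem stmt15 {d : ℕ} (hd : 1 ≤ d) (Ω : Set (EuclideanSpace ℝ (Fin d)))
    (hΩopen : IsOpen Ω) (hΩbdd : Bornology.IsBounded Ω)
    (hconn : IsConnected (Metric.thickening (1 / 2) Ω)) :
    ∀ p : ℝ, 1 ≤ p → ∃ C : ℝ, 0 < C ∧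
      ∀ f : EuclideanSpace ℝ (Fin d) → ℝ,
        MemLp f (ENNReal.ofReal p) (volume.restrict Ω) →
        IntegrableOn f Ω volume → (∫ x in Ω, f x = 0) →
        ∫⁻ x in Ω, ENNReal.ofReal (|f x| ^ p) ≤
          ENNReal.ofReal C *
            ∫⁻ x in Ω, ∫⁻ y in Ω,
              ENNReal.ofReal (if ‖x - y‖ < 1 then |f x - f y| ^ p else 0) :=
  stmt15_general Ω hΩopen hΩbdd hconn
end

section
/- Let Ω ⊂ ℝᵈ be open and bounded, O₁ an open Euclidean ball of radius at most 1/2 contained in Ω, and for n ≥ 2 define Oₙ = {y ∈ ℝᵈ : m(B(y,1) ∩ O_{n−1} ∩ Ω) > c/n} for a sufficiently small constant c > 0 so that O₁ ⊂ O₂. If the 1/2-neighborhood of Ω is connected, then Ω ⊂ ∪_{n≥1} Oₙ, and by compactness of the closure of Ω, there is a finite N with Ω ⊂ O_N. -/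
/-!
Let `O = ⋃ Oₙ`; the `Oₙ` increase because the thresholds `c / n` decrease. If `x ∉ O`, the
measure of the open set `B(x, 1) ∩ Oₙ ∩ Ω` is at most `c / m` for every `m > n`, so the set is
empty. Hence the points of `Ω ∩ O` and of `Ω \ O` are at distance at least `1`, their
`1/2`-thickenings split the connected `1/2`-thickening of `Ω`, and `Ω ⊆ O` because `O₁` is a
nonempty part of `Ω ∩ O`. The same separation gives `closure Ω ⊆ O`, and compactness of
`closure Ω` then yields a single `O_N`.
-/

open MeasureTheory Metric Set Filter Topology
open scoped ENNReal

variable {X : Type*} [PseudoMetricSpace X]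

theorem subset_of_isPreconnected_thickening {Ω U : Set X} {ρ : ℝ} (hρ : 0 < ρ)
    (hconn : IsPreconnected (thickening (ρ / 2) Ω)) (hne : (Ω ∩ U).Nonempty)
    (hsep : ∀ x ∈ Ω, x ∉ U → Disjoint (ball x ρ) (Ω ∩ U)) : Ω ⊆ U := by
  by_contra hΩU
  obtain ⟨x, hxΩ, hxU⟩ := not_subset.1 hΩU
  obtain ⟨z, hz⟩ := hne
  have hρ2 : 0 < ρ / 2 := half_pos hρ
  have hcover :
      thickening (ρ / 2) Ω ⊆ thickening (ρ / 2) (Ω ∩ U) ∪ thickening (ρ / 2) (Ω \ U) := by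
    rw [← thickening_union, inter_union_sdiff]
  obtain ⟨p, -, hpU, hpV⟩ := hconn _ _ isOpen_thickening isOpen_thickening hcover
    ⟨z, self_subset_thickening hρ2 _ hz.1, self_subset_thickening hρ2 _ hz⟩
    ⟨x, self_subset_thickening hρ2 _ hxΩ, self_subset_thickening hρ2 _ ⟨hxΩ, hxU⟩⟩
  obtain ⟨a, ha, hpa⟩ := mem_thickening_iff.1 hpU
  obtain ⟨b, ⟨hbΩ, hbU⟩, hpb⟩ := mem_thickening_iff.1 hpV
  have hab : a ∈ ball b ρ := by
    rw [mem_ball]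
    linarith [dist_triangle a p b, dist_comm a p]
  exact disjoint_left.1 (hsep b hbΩ hbU) hab ha

variable [MeasurableSpace X]

theorem isOpen_setOf_lt_measure_ball_inter (μ : Measure X) (S : Set X) (ρ : ℝ) (a : ℝ≥0∞) :
    IsOpen {y | a < μ (ball y ρ ∩ S)} := by
  refine Metric.isOpen_iff.2 fun y hy => ?_
  have hunion : ⋃ n : ℕ, ball y (ρ - 1 / (n + 1)) ∩ S = ball y ρ ∩ S := by
    rw [← iUnion_inter]
    congr 1
    ext p
    simp only [mem_iUnion, mem_ball]
    refine ⟨fun ⟨n, hn⟩ => hn.trans_le (sub_le_self _ Nat.one_div_pos_of_nat.le), fun hp => ?_⟩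
    obtain ⟨n, hn⟩ := exists_nat_one_div_lt (sub_pos.2 hp)
    exact ⟨n, by linarith⟩
  have hmono : Monotone fun n : ℕ => ball y (ρ - 1 / (n + 1)) ∩ S := fun m n hmn =>
    inter_subset_inter_left _ (ball_subset_ball (by gcongr))
  rw [mem_ofPred_eq, ← hunion, hmono.measure_iUnion, lt_iSup_iff] at hy
  obtain ⟨n, hn⟩ := hy
  refine ⟨1 / (n + 1), Nat.one_div_pos_of_nat, fun y' hy' => ?_⟩
  refine hn.trans_le (measure_mono (inter_subset_inter_left _ (ball_subset_ball' ?_)))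
  rw [mem_ball, dist_comm] at hy'
  linarith

section Recursion

variable {μ : Measure X} {O : ℕ → Set X} {Ω : Set X} {ε : ℕ → ℝ≥0∞} {ρ : ℝ}

theorem monotone_of_measure_ball_inter_recursion (hε : Antitone ε)
    (hO : ∀ n, O (n + 2) = {y | ε n < μ (ball y ρ ∩ O (n + 1) ∩ Ω)}) (h12 : O 1 ⊆ O 2) :
    Monotone fun n => O (n + 1) := by
  refine monotone_nat_of_le_succ fun n => ?_
  induction n with
  | zero => exact h12
  | succ k ih =>
    show O (k + 2) ⊆ O (k + 1 + 2)
    rw [hO, hO]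
    exact fun y hy => (hε k.le_succ).trans_lt <|
      hy.trans_le (measure_mono (inter_subset_inter_left _ (inter_subset_inter_right _ ih)))

theorem isOpen_of_measure_ball_inter_recursion
    (hO : ∀ n, O (n + 2) = {y | ε n < μ (ball y ρ ∩ O (n + 1) ∩ Ω)}) (h1 : IsOpen (O 1)) :
    ∀ n, IsOpen (O (n + 1))
  | 0 => h1
  | n + 1 => by
    rw [hO]
    simpa only [inter_assoc] using isOpen_setOf_lt_measure_ball_inter μ (O (n + 1) ∩ Ω) ρ (ε n)

theorem disjoint_ball_of_measure_ball_inter_recursion [μ.IsOpenPosMeasure]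
    (hε : Tendsto ε atTop (𝓝 0))
    (hO : ∀ n, O (n + 2) = {y | ε n < μ (ball y ρ ∩ O (n + 1) ∩ Ω)})
    (hmono : Monotone fun n => O (n + 1)) (hopen : ∀ n, IsOpen (O (n + 1))) (hΩ : IsOpen Ω)
    {x : X} (hx : x ∉ ⋃ n, O (n + 1)) : Disjoint (ball x ρ) (Ω ∩ ⋃ n, O (n + 1)) := by
  have hnull : ∀ n, μ (ball x ρ ∩ O (n + 1) ∩ Ω) = 0 := fun n =>
    nonpos_iff_eq_zero.1 <| ge_of_tendsto hε <| eventually_atTop.2 ⟨n, fun m hnm => by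
      have hxm : x ∉ O (m + 2) := fun h => hx (mem_iUnion.2 ⟨m + 1, h⟩)
      rw [hO, mem_ofPred_eq, not_lt] at hxm
      exact (measure_mono (inter_subset_inter_left _
        (inter_subset_inter_right _ (hmono hnm)))).trans hxm⟩
  have hempty : ∀ n, ball x ρ ∩ O (n + 1) ∩ Ω = ∅ := fun n =>
    (((isOpen_ball.inter (hopen n)).inter hΩ).measure_eq_zero_iff μ).1 (hnull n)
  rw [disjoint_left]
  rintro p hpx ⟨hpΩ, hpO⟩
  obtain ⟨n, hpn⟩ := mem_iUnion.1 hpO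
  exact (eq_empty_iff_forall_notMem.1 (hempty n)) p ⟨⟨hpx, hpn⟩, hpΩ⟩

end Recursion

theorem stmt16_general {d : ℕ} (Ω : Set (EuclideanSpace ℝ (Fin d)))
    (hΩopen : IsOpen Ω) (hΩbdd : Bornology.IsBounded Ω)
    (O : ℕ → Set (EuclideanSpace ℝ (Fin d)))
    (z : EuclideanSpace ℝ (Fin d)) (r : ℝ) (hr : 0 < r)
    (hO1 : O 1 = ball z r) (hO1Ω : O 1 ⊆ Ω)
    (c : ℝ) (hc : 0 < c)
    (hOdef : ∀ n : ℕ, 2 ≤ n →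
      O n = {y | c / n < (volume (ball y 1 ∩ O (n - 1) ∩ Ω)).toReal})
    (hO12 : O 1 ⊆ O 2)
    (hconn : IsConnected (Metric.thickening (1 / 2) Ω)) :
    (Ω ⊆ ⋃ n : ℕ, O (n + 1)) ∧ ∃ N : ℕ, 1 ≤ N ∧ Ω ⊆ O N := by
  set ε : ℕ → ℝ≥0∞ := fun n => ENNReal.ofReal (c / (n + 2 : ℕ))
  have hε_anti : Antitone ε := fun m n hmn =>
    ENNReal.ofReal_le_ofReal (div_le_div_of_nonneg_left hc.le (by positivity) (by simpa))
  have hε_lim : Tendsto ε atTop (𝓝 0) := by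
    rw [← ENNReal.ofReal_zero]
    exact ENNReal.tendsto_ofReal
      ((tendsto_add_atTop_iff_nat 2).2 (tendsto_const_div_atTop_nhds_zero_nat c))
  have hO : ∀ n, O (n + 2) = {y | ε n < volume (ball y 1 ∩ O (n + 1) ∩ Ω)} := by
    intro n
    rw [hOdef (n + 2) (by omega)]
    ext y
    exact (ENNReal.ofReal_lt_iff_lt_toReal (by positivity) ((measure_mono
      (inter_subset_left.trans inter_subset_left)).trans_lt measure_ball_lt_top).ne).symm
  have hmono := monotone_of_measure_ball_inter_recursion hε_anti hO hO12
  have hopen := isOpen_of_measure_ball_inter_recursion hO (hO1 ▸ isOpen_ball)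
  have hsep : ∀ x ∉ ⋃ n, O (n + 1), Disjoint (ball x 1) (Ω ∩ ⋃ n, O (n + 1)) := fun _ =>
    disjoint_ball_of_measure_ball_inter_recursion hε_lim hO hmono hopen hΩopen
  have hz : z ∈ O 1 := hO1 ▸ mem_ball_self hr
  have hΩO : Ω ⊆ ⋃ n, O (n + 1) := subset_of_isPreconnected_thickening one_pos
    hconn.isPreconnected ⟨z, hO1Ω hz, mem_iUnion.2 ⟨0, hz⟩⟩ fun x _ hx => hsep x hx
  have hclosure : closure Ω ⊆ ⋃ n, O (n + 1) := fun x hx => by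
    by_contra hxO
    have hdisj := hsep x hxO
    rw [inter_eq_left.2 hΩO] at hdisj
    exact disjoint_left.1 (hdisj.closure_right isOpen_ball) (mem_ball_self one_pos) hx
  obtain ⟨n, hn⟩ := hΩbdd.isCompact_closure.elim_directed_cover _ hopen hclosure
    hmono.directed_le
  exact ⟨hΩO, n + 1, by omega, subset_closure.trans hn⟩

theorem stmt16 {d : ℕ} (hd : 1 ≤ d) (Ω : Set (EuclideanSpace ℝ (Fin d)))
    (hΩopen : IsOpen Ω) (hΩbdd : Bornology.IsBounded Ω)
    (O : ℕ → Set (EuclideanSpace ℝ (Fin d)))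
    (z : EuclideanSpace ℝ (Fin d)) (r : ℝ) (hr : 0 < r) (hr2 : r ≤ 1 / 2)
    (hO1 : O 1 = ball z r) (hO1Ω : O 1 ⊆ Ω)
    (c : ℝ) (hc : 0 < c)
    (hOdef : ∀ n : ℕ, 2 ≤ n →
      O n = {y | c / n < (volume (ball y 1 ∩ O (n - 1) ∩ Ω)).toReal})
    (hO12 : O 1 ⊆ O 2)
    (hconn : IsConnected (Metric.thickening (1 / 2) Ω)) :
    (Ω ⊆ ⋃ n : ℕ, O (n + 1)) ∧ ∃ N : ℕ, 1 ≤ N ∧ Ω ⊆ O N :=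
  stmt16_general Ω hΩopen hΩbdd O z r hr hO1 hO1Ω c hc hOdef hO12 hconn
end
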